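/- For any divergence-free vector field u ∈ L^∞(Ω;ℝ³) ∩ H_0^1(Ω;ℝ³) on the slab Ω = T_{l_x} × T_{l_y} × (−1/2, 1/2), and the solution T of the steady advection–diffusion equation u·∇T = ΔT with T = 1 at z = −1/2 and T = 0 at z = 1/2, the heat flux satisfies Q(u) − 1 ≥ (⨏_Ω u_z ξ dx)² / (⨏_Ω |∇Δ^{-1}(u·∇ξ)|² dx + ⨏_Ω |∇ξ|² dx) for every nonzero ξ ∈ H_0^1(Ω), where Q(u) = ⨏_Ω |∇T|² dx. -/

import Mathlib

open MeasureTheory Real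

noncomputable section

abbrev E3 := EuclideanSpace ℝ (Fin 3)

/-- Partial derivative in the `i`-th coordinate direction. -/
noncomputable def pder (i : Fin 3) (φ : E3 → ℝ) (x : E3) : ℝ :=
  fderiv ℝ φ x (EuclideanSpace.single i 1)

/-- The Laplacian. -/
noncomputable def lap (φ : E3 → ℝ) (x : E3) : ℝ :=
  ∑ i : Fin 3, pder i (fun y => pder i φ y) x

/-- Squared norm of the gradient. -/
noncomputable def gradSq (φ : E3 → ℝ) (x : E3) : ℝ :=
  ∑ i : Fin 3, (pder i φ x) ^ 2

/-- The advection term u·∇φ. -/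
noncomputable def advect (u : E3 → E3) (φ : E3 → ℝ) (x : E3) : ℝ :=
  ∑ i : Fin 3, u x i * pder i φ x

/-- The divergence of a vector field. -/
noncomputable def divg (u : E3 → E3) (x : E3) : ℝ :=
  ∑ i : Fin 3, fderiv ℝ (fun y => u y i) x (EuclideanSpace.single i 1)

/-- The open slab −1/2 < z < 1/2. -/
def slab : Set E3 := {x | x 2 ∈ Set.Ioo (-(1/2) : ℝ) (1/2)}

/-- A fundamental domain of the horizontally periodic slab Ω. -/
def fund (lx ly : ℝ) : Set E3 :=
  {x | x 0 ∈ Set.Ico 0 lx ∧ x 1 ∈ Set.Ico 0 ly ∧ x 2 ∈ Set.Ioo (-(1/2) : ℝ) (1/2)}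

/-- Volume average over Ω (which has measure lx·ly·1). -/
noncomputable def avg (lx ly : ℝ) (g : E3 → ℝ) : ℝ :=
  (1 / (lx * ly)) * ∫ x in fund lx ly, g x

/-- Horizontal periodicity with periods `lx`, `ly`. -/
def Per {α : Type*} (lx ly : ℝ) (φ : E3 → α) : Prop :=
  (∀ x : E3, φ (x + lx • EuclideanSpace.single 0 1) = φ x) ∧
  (∀ x : E3, φ (x + ly • EuclideanSpace.single 1 1) = φ x)

/-! ### Auxiliary lemmas -/

section Aux

def toE : (Fin 3 → ℝ) → E3 := ⇑((MeasurableEquiv.toLp 2 (Fin 3 → ℝ)).symm).symm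
def toEL : (Fin 3 → ℝ) →L[ℝ] E3 :=
  ((PiLp.continuousLinearEquiv 2 ℝ (fun _ : Fin 3 => ℝ)).symm : (Fin 3 → ℝ) →L[ℝ] E3)

lemma toE_eq : toE = ⇑toEL := rfl
lemma toE_apply (y : Fin 3 → ℝ) (j : Fin 3) : toE y j = y j := rfl
lemma toE_single (i : Fin 3) : toEL (Pi.single i 1) = EuclideanSpace.single i (1:ℝ) := rfl

lemma pder_contDiff (i : Fin 3) {φ : E3 → ℝ} (h : ContDiff ℝ (⊤ : ℕ∞) φ) : ContDiff ℝ (⊤ : ℕ∞) (pder i φ) := by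
  unfold pder
  exact (h.fderiv_right (by simp)).clm_apply contDiff_const

lemma lap_contDiff {φ : E3 → ℝ} (h : ContDiff ℝ (⊤ : ℕ∞) φ) : ContDiff ℝ (⊤ : ℕ∞) (lap φ) := by
  unfold lap
  exact ContDiff.sum (fun i _ => pder_contDiff i (pder_contDiff i h))

lemma gradSq_cont {φ : E3 → ℝ} (h : ContDiff ℝ (⊤ : ℕ∞) φ) : Continuous (gradSq φ) := by
  unfold gradSq
  exact continuous_finset_sum _ (fun i _ => ((pder_contDiff i h).continuous.pow 2))

lemma comp_contDiff (i : Fin 3) {u : E3 → E3} (h : ContDiff ℝ (⊤ : ℕ∞) u) :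
    ContDiff ℝ (⊤ : ℕ∞) (fun x => u x i) :=
  (EuclideanSpace.proj (𝕜 := ℝ) i).contDiff.comp h

lemma advect_cont {u : E3 → E3} {φ : E3 → ℝ} (hu : ContDiff ℝ (⊤ : ℕ∞) u) (h : ContDiff ℝ (⊤ : ℕ∞) φ) :
    Continuous (advect u φ) := by
  unfold advect
  exact continuous_finset_sum _
    (fun i _ => ((comp_contDiff i hu).continuous.mul (pder_contDiff i h).continuous))

lemma contDiff_coord (j : Fin 3) : ContDiff ℝ (⊤ : ℕ∞) (fun x : E3 => x j) :=
  (EuclideanSpace.proj (𝕜 := ℝ) j).contDiff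

lemma pder_coord (i j : Fin 3) (x : E3) :
    pder i (fun x : E3 => x j) x = if j = i then 1 else 0 := by
  unfold pder
  rw [show (fun x : E3 => x j) = ⇑(EuclideanSpace.proj (𝕜 := ℝ) j) from rfl,
    ContinuousLinearMap.fderiv]
  simp [EuclideanSpace.single_apply]

lemma pder_mul (i : Fin 3) {φ ψ : E3 → ℝ} (x : E3) (hφ : DifferentiableAt ℝ φ x)
    (hψ : DifferentiableAt ℝ ψ x) :
    pder i (fun y => φ y * ψ y) x = pder i φ x * ψ x + φ x * pder i ψ x := by
  unfold pder
  rw [fderiv_fun_mul hφ hψ]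
  simp [mul_comm]
  ring

lemma pder_add (i : Fin 3) {φ ψ : E3 → ℝ} (x : E3) (hφ : DifferentiableAt ℝ φ x)
    (hψ : DifferentiableAt ℝ ψ x) :
    pder i (fun y => φ y + ψ y) x = pder i φ x + pder i ψ x := by
  unfold pder
  rw [fderiv_fun_add hφ hψ]; simp

lemma pder_sub (i : Fin 3) {φ ψ : E3 → ℝ} (x : E3) (hφ : DifferentiableAt ℝ φ x)
    (hψ : DifferentiableAt ℝ ψ x) :
    pder i (fun y => φ y - ψ y) x = pder i φ x - pder i ψ x := by
  unfold pder
  rw [fderiv_fun_sub hφ hψ]; simp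

lemma pder_const_mul (i : Fin 3) (c : ℝ) {φ : E3 → ℝ} (x : E3) (hφ : DifferentiableAt ℝ φ x) :
    pder i (fun y => c * φ y) x = c * pder i φ x := by
  unfold pder
  rw [fderiv_const_mul hφ]; simp

lemma pder_sub_const (i : Fin 3) (c : ℝ) {φ : E3 → ℝ} (x : E3) :
    pder i (fun y => φ y - c) x = pder i φ x := by
  unfold pder
  simp [fderiv_sub_const]

lemma pder_shift (i : Fin 3) {φ : E3 → ℝ} (h : Differentiable ℝ φ) (v : E3) (x : E3)
    (hper : ∀ y, φ (y + v) = φ y) : pder i φ (x + v) = pder i φ x := by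
  unfold pder
  have h1 : HasFDerivAt (fun y : E3 => φ (y + v)) (fderiv ℝ φ (x + v)) x := by
    have := ((h (x + v)).hasFDerivAt).comp x ((hasFDerivAt_id x).add_const v)
    exact this
  have h2 : (fun y : E3 => φ (y + v)) = φ := funext hper
  rw [h2] at h1
  rw [h1.fderiv]

lemma Per.pderP {lx ly : ℝ} (i : Fin 3) {φ : E3 → ℝ} (h : ContDiff ℝ (⊤ : ℕ∞) φ)
    (hper : Per lx ly φ) : Per lx ly (pder i φ) :=
  ⟨fun x => pder_shift i (h.differentiable (by simp)) _ x hper.1,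
   fun x => pder_shift i (h.differentiable (by simp)) _ x hper.2⟩

lemma Per.mulP {lx ly : ℝ} {φ ψ : E3 → ℝ} (h1 : Per lx ly φ) (h2 : Per lx ly ψ) :
    Per lx ly (fun x => φ x * ψ x) :=
  ⟨fun x => by simp [h1.1 x, h2.1 x], fun x => by simp [h1.2 x, h2.2 x]⟩

lemma Per.addP {lx ly : ℝ} {φ ψ : E3 → ℝ} (h1 : Per lx ly φ) (h2 : Per lx ly ψ) :
    Per lx ly (fun x => φ x + ψ x) :=
  ⟨fun x => by simp [h1.1 x, h2.1 x], fun x => by simp [h1.2 x, h2.2 x]⟩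

lemma Per.compP {lx ly : ℝ} (i : Fin 3) {u : E3 → E3} (h : Per lx ly u) :
    Per lx ly (fun x => u x i) :=
  ⟨fun x => congrArg (fun w : E3 => w i) (h.1 x),
   fun x => congrArg (fun w : E3 => w i) (h.2 x)⟩

lemma Per.coord2 {lx ly : ℝ} : Per lx ly (fun x : E3 => x 2) := by
  constructor <;> intro x <;>
    simp [PiLp.add_apply, PiLp.smul_apply, EuclideanSpace.single_apply]

end Aux
lemma shift0 (c : ℝ) (y : Fin 2 → ℝ) :
    toE (Fin.insertNth 0 c y) = toE (Fin.insertNth 0 0 y) + c • EuclideanSpace.single 0 1 := by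
  apply PiLp.ext
  intro j
  simp only [PiLp.add_apply, PiLp.smul_apply, EuclideanSpace.single_apply, smul_eq_mul, toE_apply]
  refine Fin.cases ?_ (fun k => ?_) j
  · simp
  · have h1 : Fin.insertNth (α := fun _ => ℝ) 0 c y k.succ = y k := rfl
    have h2 : Fin.insertNth (α := fun _ => ℝ) 0 0 y k.succ = y k := rfl
    rw [h1, h2]
    simp [Fin.succ_ne_zero]

lemma shift1 (c : ℝ) (y : Fin 2 → ℝ) :
    toE (Fin.insertNth 1 c y) = toE (Fin.insertNth 1 0 y) + c • EuclideanSpace.single 1 1 := by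
  apply PiLp.ext
  intro j
  simp only [PiLp.add_apply, PiLp.smul_apply, EuclideanSpace.single_apply, smul_eq_mul, toE_apply]
  fin_cases j
  · have h1 : Fin.insertNth (α := fun _ => ℝ) 1 c y 0 = y 0 := rfl
    have h2 : Fin.insertNth (α := fun _ => ℝ) 1 0 y 0 = y 0 := rfl
    norm_num [h1, h2]
  · have h1 : Fin.insertNth (α := fun _ => ℝ) 1 c y 1 = c := rfl
    have h2 : Fin.insertNth (α := fun _ => ℝ) 1 0 y 1 = 0 := rfl
    norm_num [h1, h2]
  · have h1 : Fin.insertNth (α := fun _ => ℝ) 1 c y 2 = y 1 := rfl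
    have h2 : Fin.insertNth (α := fun _ => ℝ) 1 0 y 2 = y 1 := rfl
    show Fin.insertNth (α := fun _ => ℝ) 1 c y 2
      = Fin.insertNth (α := fun _ => ℝ) 1 0 y 2 + c * if (2 : Fin 3) = 1 then (1:ℝ) else 0
    rw [h1, h2]
    norm_num [Fin.ext_iff]

lemma master (lx ly : ℝ) (hlx : 0 < lx) (hly : 0 < ly)
    (f : Fin 3 → E3 → ℝ) (hsm : ∀ i, ContDiff ℝ (⊤ : ℕ∞) (f i)) (hper : ∀ i, Per lx ly (f i)) :
    ∫ x in fund lx ly, ∑ i, pder i (f i) x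
      = (∫ y in Set.Icc (![0,0] : Fin 2 → ℝ) ![lx, ly], f 2 (toE (Fin.insertNth 2 (1/2) y)))
        - ∫ y in Set.Icc (![0,0] : Fin 2 → ℝ) ![lx, ly], f 2 (toE (Fin.insertNth 2 (-(1/2)) y)) := by
  classical
  set aa : Fin 3 → ℝ := ![0, 0, -(1/2)] with haa
  set bb : Fin 3 → ℝ := ![lx, ly, 1/2] with hbb
  have hle : aa ≤ bb := by
    intro i; fin_cases i <;> simp [haa, hbb] <;> [exact hlx.le; exact hly.le] 
  -- Step 1: move to the Pi world
  set mE := (MeasurableEquiv.toLp 2 (Fin 3 → ℝ)).symm with hmE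
  set S : Set (Fin 3 → ℝ) :=
    {y | y 0 ∈ Set.Ico 0 lx ∧ y 1 ∈ Set.Ico 0 ly ∧ y 2 ∈ Set.Ioo (-(1/2) : ℝ) (1/2)} with hS
  have hfund : fund lx ly = mE ⁻¹' S := rfl
  have h1 : ∫ x in fund lx ly, ∑ i, pder i (f i) x
      = ∫ y in S, ∑ i, pder i (f i) (toE y) := by
    rw [hfund, ← (EuclideanSpace.volume_preserving_symm_measurableEquiv_toLp (Fin 3)).setIntegral_preimage_emb
      (mE.measurableEmbedding) (fun y => ∑ i, pder i (f i) (toE y)) S]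
    congr 1
  have hSae : S =ᵐ[(volume : Measure (Fin 3 → ℝ))] Set.Icc aa bb := by
    have hSpi : S = Set.pi Set.univ
        ![Set.Ico 0 lx, Set.Ico 0 ly, Set.Ioo (-(1/2) : ℝ) (1/2)] := by
      ext y
      simp only [hS, Set.mem_setOf_eq, Set.mem_pi, Set.mem_univ, forall_true_left]
      constructor
      · rintro ⟨h0, h1, h2⟩ i; fin_cases i <;> simp_all [Set.mem_Ioo, Set.mem_Ico]
      · intro h; exact ⟨by simpa using h 0, by simpa using h 1, by simpa using h 2⟩
    rw [hSpi, ← Set.pi_univ_Icc, volume_pi]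
    refine MeasureTheory.Measure.ae_eq_set_pi (fun i _ => ?_)
    fin_cases i
    · simpa [haa, hbb] using (Ico_ae_eq_Icc (α := ℝ) (a := (0:ℝ)) (b := lx))
    · simpa [haa, hbb] using (Ico_ae_eq_Icc (α := ℝ) (a := (0:ℝ)) (b := ly))
    · simpa [haa, hbb] using (Ioo_ae_eq_Icc (α := ℝ) (a := (-(1/2):ℝ)) (b := (1/2:ℝ)))
  have h2 : ∫ y in S, ∑ i, pder i (f i) (toE y)
      = ∫ y in Set.Icc aa bb, ∑ i, pder i (f i) (toE y) :=
    setIntegral_congr_set hSae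
  -- Step 2: divergence theorem in the Pi world
  have hdiv := MeasureTheory.integral_divergence_of_hasFDerivAt_off_countable' aa bb hle
    (fun i y => f i (toE y))
    (fun i y => (fderiv ℝ (f i) (toE y)).comp toEL) ∅ Set.countable_empty
    (fun i => ((hsm i).continuous.comp toEL.continuous).continuousOn)
    (fun x _ i => by
      have : HasFDerivAt (f i) (fderiv ℝ (f i) (toE x)) (toE x) :=
        ((hsm i).differentiable (by simp) (toE x)).hasFDerivAt
      exact this.comp x toEL.hasFDerivAt)
    (by
      have hc : Continuous (fun y : Fin 3 → ℝ => ∑ i : Fin 3, pder i (f i) (toE y)) := by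
        refine continuous_finset_sum _ (fun i _ => ?_)
        exact ((pder_contDiff i (hsm i)).continuous.comp toEL.continuous)
      exact hc.continuousOn.integrableOn_compact isCompact_Icc)
  rw [h1, h2]
  refine Eq.trans (by exact hdiv) ?_
  rw [Fin.sum_univ_three]
  have hface0 : (∫ y in Set.Icc (aa ∘ Fin.succAbove 0) (bb ∘ Fin.succAbove 0),
        f 0 (toE (Fin.insertNth 0 (bb 0) y)))
      = ∫ y in Set.Icc (aa ∘ Fin.succAbove 0) (bb ∘ Fin.succAbove 0),
        f 0 (toE (Fin.insertNth 0 (aa 0) y)) := by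
    refine setIntegral_congr_fun measurableSet_Icc (fun y _ => ?_)
    have hb0 : bb 0 = lx := rfl
    have ha0 : aa 0 = (0:ℝ) := rfl
    rw [hb0, ha0, shift0, (hper 0).1]
  have hface1 : (∫ y in Set.Icc (aa ∘ Fin.succAbove 1) (bb ∘ Fin.succAbove 1),
        f 1 (toE (Fin.insertNth 1 (bb 1) y)))
      = ∫ y in Set.Icc (aa ∘ Fin.succAbove 1) (bb ∘ Fin.succAbove 1),
        f 1 (toE (Fin.insertNth 1 (aa 1) y)) := by
    refine setIntegral_congr_fun measurableSet_Icc (fun y _ => ?_)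
    have hb1 : bb 1 = ly := rfl
    have ha1 : aa 1 = (0:ℝ) := rfl
    rw [hb1, ha1, shift1, (hper 1).2]
  rw [hface0, hface1]
  have hset : Set.Icc (aa ∘ Fin.succAbove 2) (bb ∘ Fin.succAbove 2)
      = Set.Icc (![0,0] : Fin 2 → ℝ) ![lx, ly] := by
    have e1 : aa ∘ Fin.succAbove 2 = ![0,0] := by funext k; fin_cases k <;> rfl
    have e2 : bb ∘ Fin.succAbove 2 = ![lx,ly] := by funext k; fin_cases k <;> rfl
    rw [e1, e2]
  have hb2 : bb 2 = (1/2 : ℝ) := rfl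
  have ha2 : aa 2 = (-(1/2) : ℝ) := rfl
  rw [hset, hb2, ha2]
  ring

lemma meas_fund (lx ly : ℝ) : MeasurableSet (fund lx ly) := by
  have : fund lx ly = ((MeasurableEquiv.toLp 2 (Fin 3 → ℝ)).symm) ⁻¹'
      {y : Fin 3 → ℝ | y 0 ∈ Set.Ico 0 lx ∧ y 1 ∈ Set.Ico 0 ly ∧
        y 2 ∈ Set.Ioo (-(1/2) : ℝ) (1/2)} := rfl
  rw [this]
  apply MeasurableEquiv.measurable
  refine MeasurableSet.inter ?_ (MeasurableSet.inter ?_ ?_)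
  · exact (measurable_pi_apply 0) measurableSet_Ico
  · exact (measurable_pi_apply 1) measurableSet_Ico
  · exact (measurable_pi_apply 2) measurableSet_Ioo

lemma integrableOn_fund (lx ly : ℝ) {g : E3 → ℝ} (hg : Continuous g) :
    IntegrableOn g (fund lx ly) := by
  have hK : IsCompact (toE '' Set.Icc ![0,0,-(1/2)] ![lx,ly,(1/2)]) := by
    rw [toE_eq]
    exact (isCompact_Icc).image toEL.continuous
  have hsub : fund lx ly ⊆ toE '' Set.Icc ![0,0,-(1/2)] ![lx,ly,(1/2)] := by
    intro x hx
    obtain ⟨h0, h1, h2⟩ := hx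
    refine ⟨(MeasurableEquiv.toLp 2 (Fin 3 → ℝ)).symm x, ?_, ?_⟩
    · constructor <;> intro j <;> fin_cases j
      · exact h0.1
      · exact h1.1
      · exact le_of_lt h2.1
      · exact le_of_lt h0.2
      · exact h1.2.le
      · exact h2.2.le
    · exact ((MeasurableEquiv.toLp 2 (Fin 3 → ℝ)).symm).symm_apply_apply x
  exact (hg.continuousOn.integrableOn_compact hK).mono_set hsub

lemma master_zero (lx ly : ℝ) (hlx : 0 < lx) (hly : 0 < ly)
    (f : Fin 3 → E3 → ℝ) (hsm : ∀ i, ContDiff ℝ (⊤ : ℕ∞) (f i)) (hper : ∀ i, Per lx ly (f i))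
    (hbc : ∀ x : E3, (x 2 = 1/2 ∨ x 2 = -(1/2)) → f 2 x = 0) :
    ∫ x in fund lx ly, ∑ i, pder i (f i) x = 0 := by
  rw [master lx ly hlx hly f hsm hper]
  have e1 : ∀ (c : ℝ) (y : Fin 2 → ℝ), (toE (Fin.insertNth 2 c y)) 2 = c := fun c y => rfl
  have z1 : ∀ y : Fin 2 → ℝ, f 2 (toE (Fin.insertNth 2 (1/2) y)) = 0 := fun y =>
    hbc _ (Or.inl (e1 _ y))
  have z2 : ∀ y : Fin 2 → ℝ, f 2 (toE (Fin.insertNth 2 (-(1/2)) y)) = 0 := fun y =>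
    hbc _ (Or.inr (e1 _ y))
  simp only [z1, z2, integral_zero, sub_zero]

/-- The total vertical flux of a "temperature-like" field. -/
lemma flux (lx ly : ℝ) (hlx : 0 < lx) (hly : 0 < ly)
    (T : E3 → ℝ) (hsm : ContDiff ℝ (⊤ : ℕ∞) T) (hper : Per lx ly T)
    (hbot : ∀ x : E3, x 2 = -(1/2) → T x = 1) (htop : ∀ x : E3, x 2 = 1/2 → T x = 0) :
    ∫ x in fund lx ly, pder 2 T x = -(lx * ly) := by
  classical
  set f : Fin 3 → E3 → ℝ := fun i => if i = 2 then T else (fun _ => 0) with hf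
  have hsum : ∀ x : E3, ∑ i, pder i (f i) x = pder 2 T x := by
    intro x
    rw [Fin.sum_univ_three]
    have e0 : f 0 = fun _ => (0:ℝ) := rfl
    have e1 : f 1 = fun _ => (0:ℝ) := rfl
    have e2 : f 2 = T := rfl
    rw [e0, e1, e2]
    have z : ∀ i : Fin 3, pder i (fun _ : E3 => (0:ℝ)) x = 0 := by
      intro i; unfold pder; simp
    rw [z 0, z 1]; ring
  have h1 : ∫ x in fund lx ly, pder 2 T x = ∫ x in fund lx ly, ∑ i, pder i (f i) x := by
    refine setIntegral_congr_fun (meas_fund lx ly) (fun x _ => (hsum x).symm)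
  rw [h1, master lx ly hlx hly f
    (by
      intro i
      fin_cases i <;> simp [hf]
      · exact contDiff_const
      · exact contDiff_const
      · exact hsm)
    (by
      intro i
      fin_cases i <;> simp only [hf]
      · exact ⟨fun x => rfl, fun x => rfl⟩
      · exact ⟨fun x => rfl, fun x => rfl⟩
      · simpa using hper)]
  have e2 : f 2 = T := rfl
  rw [e2]
  have ecoord : ∀ (c : ℝ) (y : Fin 2 → ℝ), (toE (Fin.insertNth 2 c y)) 2 = c := fun c y => rfl
  have z1 : ∀ y : Fin 2 → ℝ, T (toE (Fin.insertNth 2 (1/2) y)) = 0 := fun y =>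
    htop _ (ecoord _ y)
  have z2 : ∀ y : Fin 2 → ℝ, T (toE (Fin.insertNth 2 (-(1/2)) y)) = 1 := fun y =>
    hbot _ (ecoord _ y)
  simp only [z1, z2, integral_zero, zero_sub]
  rw [setIntegral_const]
  rw [measureReal_def, Real.volume_Icc_pi_toReal (by intro i; fin_cases i <;> simp <;> positivity)]
  rw [Fin.prod_univ_two]
  norm_num

lemma sum_pder_mulvec {u : E3 → E3} (hu : ContDiff ℝ (⊤ : ℕ∞) u) {g : E3 → ℝ}
    (hg : ContDiff ℝ (⊤ : ℕ∞) g) (x : E3) :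
    ∑ i : Fin 3, pder i (fun y => g y * u y i) x = advect u g x + g x * divg u x := by
  have hgd : DifferentiableAt ℝ g x := (hg.differentiable (by simp)) x
  have hud : ∀ i : Fin 3, DifferentiableAt ℝ (fun y => u y i) x :=
    fun i => ((comp_contDiff i hu).differentiable (by simp)) x
  rw [Fin.sum_univ_three, pder_mul 0 x hgd (hud 0), pder_mul 1 x hgd (hud 1),
    pder_mul 2 x hgd (hud 2)]
  unfold advect divg pder
  rw [Fin.sum_univ_three, Fin.sum_univ_three]
  ring

lemma sum_pder_gradmul {g h : E3 → ℝ} (hg : ContDiff ℝ (⊤ : ℕ∞) g) (hh : ContDiff ℝ (⊤ : ℕ∞) h) (x : E3) :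
    ∑ i : Fin 3, pder i (fun y => g y * pder i h y) x
      = (∑ i : Fin 3, pder i g x * pder i h x) + g x * lap h x := by
  have hgd : DifferentiableAt ℝ g x := (hg.differentiable (by simp)) x
  have hhd : ∀ i : Fin 3, DifferentiableAt ℝ (pder i h) x :=
    fun i => ((pder_contDiff i hh).differentiable (by simp)) x
  rw [Fin.sum_univ_three, pder_mul 0 x hgd (hhd 0), pder_mul 1 x hgd (hhd 1),
    pder_mul 2 x hgd (hhd 2)]
  unfold lap
  rw [Fin.sum_univ_three, Fin.sum_univ_three]
  ring

lemma ibpA (lx ly : ℝ) (hlx : 0 < lx) (hly : 0 < ly)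
    {u : E3 → E3} (hu : ContDiff ℝ (⊤ : ℕ∞) u) (huper : Per lx ly u)
    (hdiv : ∀ x, divg u x = 0)
    (hu_bc : ∀ x : E3, (x 2 = 1/2 ∨ x 2 = -(1/2)) → u x = 0)
    {g : E3 → ℝ} (hg : ContDiff ℝ (⊤ : ℕ∞) g) (hgper : Per lx ly g) :
    ∫ x in fund lx ly, advect u g x = 0 := by
  have key := master_zero lx ly hlx hly (fun i y => g y * u y i)
    (fun i => hg.mul (comp_contDiff i hu))
    (fun i => hgper.mulP (huper.compP i))
    (by
      intro x hx
      have h0 : u x = 0 := hu_bc x hx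
      have : u x 2 = 0 := by rw [h0]; rfl
      simp only [this, mul_zero])
  rw [← key]
  refine setIntegral_congr_fun (meas_fund lx ly) (fun x _ => ?_)
  have := sum_pder_mulvec hu hg x
  rw [hdiv x, mul_zero, add_zero] at this
  exact this.symm

lemma ibpB (lx ly : ℝ) (hlx : 0 < lx) (hly : 0 < ly)
    {g h : E3 → ℝ} (hg : ContDiff ℝ (⊤ : ℕ∞) g) (hh : ContDiff ℝ (⊤ : ℕ∞) h)
    (hgper : Per lx ly g) (hhper : Per lx ly h)
    (hg_bc : ∀ x : E3, (x 2 = 1/2 ∨ x 2 = -(1/2)) → g x = 0) :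
    ∫ x in fund lx ly, ((∑ i : Fin 3, pder i g x * pder i h x) + g x * lap h x) = 0 := by
  have key := master_zero lx ly hlx hly (fun i y => g y * pder i h y)
    (fun i => hg.mul (pder_contDiff i hh))
    (fun i => hgper.mulP (hhper.pderP i hh))
    (by
      intro x hx
      simp only [hg_bc x hx, zero_mul])
  rw [← key]
  refine setIntegral_congr_fun (meas_fund lx ly) (fun x _ => ?_)
  exact (sum_pder_gradmul hg hh x).symm

lemma pder_const (i : Fin 3) (c : ℝ) (x : E3) : pder i (fun _ : E3 => c) x = 0 := by
  unfold pder; simp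

lemma Per.subConstP {lx ly c : ℝ} {ψ : E3 → ℝ} (h : Per lx ly ψ) :
    Per lx ly (fun x => ψ x - c) :=
  ⟨fun x => by simp only [h.1 x], fun x => by simp only [h.2 x]⟩

lemma Per.constSubP {lx ly c : ℝ} {ψ : E3 → ℝ} (h : Per lx ly ψ) :
    Per lx ly (fun x => c - ψ x) :=
  ⟨fun x => by simp only [h.1 x], fun x => by simp only [h.2 x]⟩

lemma advect_mul {u : E3 → E3} (hu : ContDiff ℝ (⊤ : ℕ∞) u) {g h : E3 → ℝ}
    (hg : ContDiff ℝ (⊤ : ℕ∞) g) (hh : ContDiff ℝ (⊤ : ℕ∞) h) (x : E3) :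
    advect u (fun y => g y * h y) x = advect u g x * h x + g x * advect u h x := by
  have hgd : DifferentiableAt ℝ g x := (hg.differentiable (by simp)) x
  have hhd : DifferentiableAt ℝ h x := (hh.differentiable (by simp)) x
  unfold advect
  rw [Fin.sum_univ_three, pder_mul 0 x hgd hhd, pder_mul 1 x hgd hhd, pder_mul 2 x hgd hhd,
    Fin.sum_univ_three, Fin.sum_univ_three]
  ring

lemma cont_dot {g h : E3 → ℝ} (hg : ContDiff ℝ (⊤ : ℕ∞) g) (hh : ContDiff ℝ (⊤ : ℕ∞) h) :
    Continuous (fun x => ∑ i : Fin 3, pder i g x * pder i h x) :=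
  continuous_finset_sum _
    (fun i _ => ((pder_contDiff i hg).continuous.mul (pder_contDiff i hh).continuous))

/-- Lower-bound direction of the Doering–Tobasco variational principle: for any admissible
divergence-free `u`, the heat flux `Q(u) = ⨏ |∇T|²` satisfies
`Q(u) − 1 ≥ (⨏ u_z ξ)² / (⨏ |∇Δ⁻¹(u·∇ξ)|² + ⨏ |∇ξ|²)` for every nonzero admissible `ξ`,
where `η = Δ⁻¹(u·∇ξ)` solves the Dirichlet problem `Δη = u·∇ξ`. -/
theorem stmt_18 (lx ly : ℝ) (hlx : 0 < lx) (hly : 0 < ly)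
    (u : E3 → E3) (T ξ η : E3 → ℝ) (M : ℝ)
    (hu_smooth : ContDiff ℝ (⊤ : ℕ∞) u) (hu_bdd : ∀ x, ‖u x‖ ≤ M)
    (hu_per : Per lx ly u) (hT_per : Per lx ly T) (hξ_per : Per lx ly ξ)
    (hη_per : Per lx ly η)
    (hT_smooth : ContDiff ℝ (⊤ : ℕ∞) T) (hξ_smooth : ContDiff ℝ (⊤ : ℕ∞) ξ)
    (hη_smooth : ContDiff ℝ (⊤ : ℕ∞) η)
    (hdiv : ∀ x, divg u x = 0)
    (hu_bc : ∀ x : E3, (x 2 = 1/2 ∨ x 2 = -(1/2)) → u x = 0)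
    -- T solves the steady advection–diffusion equation with the given boundary conditions
    (hT_pde : ∀ x ∈ slab, advect u T x = lap T x)
    (hT_bot : ∀ x : E3, x 2 = -(1/2) → T x = 1)
    (hT_top : ∀ x : E3, x 2 = 1/2 → T x = 0)
    -- ξ ∈ H₀¹(Ω), nonzero
    (hξ_bc : ∀ x : E3, (x 2 = 1/2 ∨ x 2 = -(1/2)) → ξ x = 0)
    (hξ_ne : 0 < avg lx ly (gradSq ξ))
    -- η = Δ⁻¹(u·∇ξ): solution of the Poisson problem with homogeneous Dirichlet conditions
    (hη_pde : ∀ x ∈ slab, lap η x = advect u ξ x)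
    (hη_bc : ∀ x : E3, (x 2 = 1/2 ∨ x 2 = -(1/2)) → η x = 0) :
    avg lx ly (gradSq T) - 1
      ≥ (avg lx ly (fun x => u x 2 * ξ x)) ^ 2
          / (avg lx ly (gradSq η) + avg lx ly (gradSq ξ)) := by
  classical
  set V : ℝ := lx * ly with hV
  have hVpos : 0 < V := mul_pos hlx hly
  set θ : E3 → ℝ := fun x => T x + x 2 - 1/2 with hθ
  set φ : E3 → ℝ := fun x => η x + ξ x with hφ
  have hθs : ContDiff ℝ (⊤ : ℕ∞) θ := (hT_smooth.add (contDiff_coord 2)).sub contDiff_const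
  have hφs : ContDiff ℝ (⊤ : ℕ∞) φ := hη_smooth.add hξ_smooth
  have hθper : Per lx ly θ := (hT_per.addP Per.coord2).subConstP
  have hφper : Per lx ly φ := hη_per.addP hξ_per
  have hθ_bc : ∀ x : E3, (x 2 = 1/2 ∨ x 2 = -(1/2)) → θ x = 0 := by
    rintro x (hx | hx)
    · simp only [hθ, hT_top x hx, hx]; ring
    · simp only [hθ, hT_bot x hx, hx]; ring
  have hφ_bc : ∀ x : E3, (x 2 = 1/2 ∨ x 2 = -(1/2)) → φ x = 0 := by
    intro x hx
    simp only [hφ, hη_bc x hx, hξ_bc x hx, add_zero]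
  -- pointwise derivative relations
  have hTd : Differentiable ℝ T := hT_smooth.differentiable (by simp)
  have hcd : Differentiable ℝ (fun x : E3 => x 2) := (contDiff_coord 2).differentiable (by simp)
  have pder_theta : ∀ (i : Fin 3) (x : E3),
      pder i θ x = pder i T x + (if (2 : Fin 3) = i then (1:ℝ) else 0) := by
    intro i x
    rw [hθ]
    rw [pder_sub_const i (1/2)]
    rw [pder_add i x (hTd x) (hcd x), pder_coord]
  have lap_theta : ∀ x : E3, lap θ x = lap T x := by
    intro x
    unfold lap
    refine Finset.sum_congr rfl (fun i _ => ?_)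
    have e : (fun y => pder i θ y) = fun y => pder i T y + (if (2 : Fin 3) = i then (1:ℝ) else 0) :=
      funext (fun y => pder_theta i y)
    rw [e, pder_add i x ((pder_contDiff i hT_smooth).differentiable (by simp) x)
      (differentiableAt_const _), pder_const]
    ring
  have adv_theta : ∀ x : E3, advect u θ x = advect u T x + u x 2 := by
    intro x
    unfold advect
    rw [Fin.sum_univ_three, Fin.sum_univ_three, pder_theta 0, pder_theta 1, pder_theta 2]
    norm_num [Fin.ext_iff]
    ring
  -- key pointwise identity on the slab
  have R1 : ∀ x ∈ fund lx ly, u x 2 = advect u θ x - lap θ x := by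
    intro x hx
    have hslab : x ∈ slab := hx.2.2
    rw [adv_theta x, lap_theta x, hT_pde x hslab]
    ring
  -- integrability of everything continuous
  have Int : ∀ {g : E3 → ℝ}, Continuous g → IntegrableOn g (fund lx ly) :=
    fun hg => integrableOn_fund lx ly hg
  -- Step 1 : ∫ gradSq T = ∫ gradSq θ + V
  have flux_T : ∫ x in fund lx ly, pder 2 T x = -V :=
    flux lx ly hlx hly T hT_smooth hT_per hT_bot hT_top
  have vol_fund : ∫ x in fund lx ly, (1:ℝ) = V := by
    set τ : E3 → ℝ := fun x => 1/2 - x 2 with hτ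
    have hτs : ContDiff ℝ (⊤ : ℕ∞) τ := contDiff_const.sub (contDiff_coord 2)
    have flux_τ : ∫ x in fund lx ly, pder 2 τ x = -V :=
      flux lx ly hlx hly τ hτs (Per.coord2.constSubP)
        (fun x hx => by simp only [hτ, hx]; ring)
        (fun x hx => by simp only [hτ, hx]; ring)
    have e : ∀ x : E3, pder 2 τ x = -1 := by
      intro x
      rw [hτ, pder_sub 2 x (differentiableAt_const _) (hcd x), pder_const, pder_coord]
      norm_num
    rw [setIntegral_congr_fun (meas_fund lx ly) (fun x _ => e x)] at flux_τ
    rw [integral_neg] at flux_τ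
    simpa using flux_τ
  have int_pder2θ : ∫ x in fund lx ly, pder 2 θ x = 0 := by
    have e : ∀ x : E3, pder 2 θ x = pder 2 T x + 1 := by
      intro x; rw [pder_theta 2]; norm_num
    rw [setIntegral_congr_fun (meas_fund lx ly) (fun x _ => e x)]
    rw [integral_add (Int (pder_contDiff 2 hT_smooth).continuous) (Int continuous_const)]
    rw [flux_T, vol_fund]
    ring
  have step1 : ∫ x in fund lx ly, gradSq T x = (∫ x in fund lx ly, gradSq θ x) + V := by
    have e : ∀ x : E3, gradSq T x = gradSq θ x - 2 * pder 2 θ x + 1 := by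
      intro x
      unfold gradSq
      rw [Fin.sum_univ_three, Fin.sum_univ_three, pder_theta 0, pder_theta 1, pder_theta 2]
      norm_num [Fin.ext_iff]
      ring
    rw [setIntegral_congr_fun (meas_fund lx ly) (fun x _ => e x)]
    rw [integral_add (Int ((gradSq_cont hθs).fun_sub
        (continuous_const.fun_mul (pder_contDiff 2 hθs).continuous))) (Int continuous_const)]
    rw [integral_sub (Int (gradSq_cont hθs))
      (Int (continuous_const.fun_mul (pder_contDiff 2 hθs).continuous))]
    rw [MeasureTheory.integral_const_mul, int_pder2θ, vol_fund]
    ring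
  -- differentiability shortcuts
  have hηd : Differentiable ℝ η := hη_smooth.differentiable (by simp)
  have hξd : Differentiable ℝ ξ := hξ_smooth.differentiable (by simp)
  have hlapη : ∀ x ∈ fund lx ly, lap η x = advect u ξ x := fun x hx => hη_pde x hx.2.2
  set A : ℝ := ∫ x in fund lx ly, gradSq θ x with hA
  set B : ℝ := ∫ x in fund lx ly, ∑ i : Fin 3, pder i θ x * pder i φ x with hB
  set C : ℝ := ∫ x in fund lx ly, gradSq φ x with hC
  -- integration by parts identities
  have b1 : (∫ x in fund lx ly, advect u θ x * ξ x)
      + (∫ x in fund lx ly, θ x * advect u ξ x) = 0 := by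
    rw [← integral_add (Int ((advect_cont hu_smooth hθs).fun_mul hξ_smooth.continuous))
      (Int (hθs.continuous.fun_mul (advect_cont hu_smooth hξ_smooth)))]
    rw [← ibpA lx ly hlx hly hu_smooth hu_per hdiv hu_bc (hθs.mul hξ_smooth)
      (hθper.mulP hξ_per)]
    exact setIntegral_congr_fun (meas_fund lx ly)
      (fun x _ => (advect_mul hu_smooth hθs hξ_smooth x).symm)
  have b2 : (∫ x in fund lx ly, ∑ i : Fin 3, pder i ξ x * pder i θ x)
      + (∫ x in fund lx ly, ξ x * lap θ x) = 0 := by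
    rw [← integral_add (Int (cont_dot hξ_smooth hθs))
      (Int (hξ_smooth.continuous.fun_mul (lap_contDiff hθs).continuous))]
    exact ibpB lx ly hlx hly hξ_smooth hθs hξ_per hθper hξ_bc
  have b3 : (∫ x in fund lx ly, ∑ i : Fin 3, pder i θ x * pder i η x)
      + (∫ x in fund lx ly, θ x * lap η x) = 0 := by
    rw [← integral_add (Int (cont_dot hθs hη_smooth))
      (Int (hθs.continuous.fun_mul (lap_contDiff hη_smooth).continuous))]
    exact ibpB lx ly hlx hly hθs hη_smooth hθper hη_per hθ_bc
  have b5 : (∫ x in fund lx ly, ∑ i : Fin 3, pder i ξ x * pder i η x)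
      + (∫ x in fund lx ly, ξ x * lap η x) = 0 := by
    rw [← integral_add (Int (cont_dot hξ_smooth hη_smooth))
      (Int (hξ_smooth.continuous.fun_mul (lap_contDiff hη_smooth).continuous))]
    exact ibpB lx ly hlx hly hξ_smooth hη_smooth hξ_per hη_per hξ_bc
  have b4 : (∫ x in fund lx ly, ξ x * advect u ξ x) = 0 := by
    have h0 := ibpA lx ly hlx hly hu_smooth hu_per hdiv hu_bc (hξ_smooth.mul hξ_smooth)
      (hξ_per.mulP hξ_per)
    have h1 : ∫ x in fund lx ly, advect u (fun y => ξ y * ξ y) x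
        = ∫ x in fund lx ly, 2 * (ξ x * advect u ξ x) := by
      refine setIntegral_congr_fun (meas_fund lx ly) (fun x _ => ?_)
      rw [advect_mul hu_smooth hξ_smooth hξ_smooth x]
      ring
    rw [h1, MeasureTheory.integral_const_mul] at h0
    linarith
  -- Step 2 : the flux representation  ∫ u_z ξ = B
  have step2 : (∫ x in fund lx ly, u x 2 * ξ x) = B := by
    have e1 : (∫ x in fund lx ly, u x 2 * ξ x)
        = (∫ x in fund lx ly, advect u θ x * ξ x)
          - (∫ x in fund lx ly, lap θ x * ξ x) := by
      rw [← integral_sub (Int ((advect_cont hu_smooth hθs).fun_mul hξ_smooth.continuous))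
        (Int ((lap_contDiff hθs).continuous.fun_mul hξ_smooth.continuous))]
      refine setIntegral_congr_fun (meas_fund lx ly) (fun x hx => ?_)
      rw [R1 x hx]; ring
    have e2 : (∫ x in fund lx ly, lap θ x * ξ x)
        = - (∫ x in fund lx ly, ∑ i : Fin 3, pder i ξ x * pder i θ x) := by
      have ecomm : (∫ x in fund lx ly, lap θ x * ξ x)
          = ∫ x in fund lx ly, ξ x * lap θ x :=
        setIntegral_congr_fun (meas_fund lx ly) (fun x _ => mul_comm _ _)
      rw [ecomm]; linarith
    have e3 : (∫ x in fund lx ly, θ x * advect u ξ x)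
        = - (∫ x in fund lx ly, ∑ i : Fin 3, pder i θ x * pder i η x) := by
      have ecomm : (∫ x in fund lx ly, θ x * advect u ξ x)
          = ∫ x in fund lx ly, θ x * lap η x :=
        setIntegral_congr_fun (meas_fund lx ly) (fun x hx => by rw [hlapη x hx])
      rw [ecomm]; linarith
    have e4 : (∫ x in fund lx ly, advect u θ x * ξ x)
        = ∫ x in fund lx ly, ∑ i : Fin 3, pder i θ x * pder i η x := by
      have := b1; rw [e3] at this; linarith
    have e5 : B = (∫ x in fund lx ly, ∑ i : Fin 3, pder i θ x * pder i η x)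
        + (∫ x in fund lx ly, ∑ i : Fin 3, pder i ξ x * pder i θ x) := by
      rw [hB, ← integral_add (Int (cont_dot hθs hη_smooth)) (Int (cont_dot hξ_smooth hθs))]
      refine setIntegral_congr_fun (meas_fund lx ly) (fun x _ => ?_)
      have ep : ∀ i : Fin 3, pder i φ x = pder i η x + pder i ξ x := by
        intro i
        rw [hφ, pder_add i x (hηd x) (hξd x)]
      rw [Fin.sum_univ_three, Fin.sum_univ_three, Fin.sum_univ_three, ep 0, ep 1, ep 2]
      ring
    rw [e1, e2, e4, e5]; ring
  -- Step 3 : C = ∫|∇η|² + ∫|∇ξ|²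
  have b5' : (∫ x in fund lx ly, ∑ i : Fin 3, pder i ξ x * pder i η x) = 0 := by
    have ecomm : (∫ x in fund lx ly, ξ x * lap η x)
        = ∫ x in fund lx ly, ξ x * advect u ξ x :=
      setIntegral_congr_fun (meas_fund lx ly) (fun x hx => by rw [hlapη x hx])
    rw [ecomm, b4] at b5; linarith
  have step3 : C = (∫ x in fund lx ly, gradSq η x) + (∫ x in fund lx ly, gradSq ξ x) := by
    have e : ∀ x : E3, gradSq φ x
        = (gradSq η x + gradSq ξ x) + 2 * (∑ i : Fin 3, pder i ξ x * pder i η x) := by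
      intro x
      unfold gradSq
      have ep : ∀ i : Fin 3, pder i φ x = pder i η x + pder i ξ x := by
        intro i; rw [hφ, pder_add i x (hηd x) (hξd x)]
      rw [Fin.sum_univ_three, Fin.sum_univ_three, Fin.sum_univ_three, Fin.sum_univ_three,
        ep 0, ep 1, ep 2]
      ring
    rw [hC, setIntegral_congr_fun (meas_fund lx ly) (fun x _ => e x),
      integral_add (Int ((gradSq_cont hη_smooth).fun_add (gradSq_cont hξ_smooth)))
        (Int (continuous_const.fun_mul (cont_dot hξ_smooth hη_smooth))),
      integral_add (Int (gradSq_cont hη_smooth)) (Int (gradSq_cont hξ_smooth)),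
      MeasureTheory.integral_const_mul, b5']
    ring
  -- Step 4 : quadratic inequality  0 ≤ A - 2tB + t²C
  have step4 : ∀ t : ℝ, 0 ≤ A - 2*t*B + t^2*C := by
    intro t
    have hψs : ContDiff ℝ (⊤ : ℕ∞) (fun x => θ x - t * φ x) := hθs.sub (contDiff_const.mul hφs)
    have hnon : 0 ≤ ∫ x in fund lx ly, gradSq (fun y => θ y - t * φ y) x :=
      setIntegral_nonneg (meas_fund lx ly)
        (fun x _ => Finset.sum_nonneg (fun i _ => sq_nonneg _))
    have e : ∀ x : E3, gradSq (fun y => θ y - t * φ y) x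
        = gradSq θ x - 2*t*(∑ i : Fin 3, pder i θ x * pder i φ x) + t^2 * gradSq φ x := by
      intro x
      unfold gradSq
      have ep : ∀ i : Fin 3, pder i (fun y => θ y - t * φ y) x
          = pder i θ x - t * pder i φ x := by
        intro i
        rw [pder_sub i x ((hθs.differentiable (by simp)) x)
          (((contDiff_const.mul hφs).differentiable (by simp)) x),
          pder_const_mul i t x ((hφs.differentiable (by simp)) x)]
      rw [Fin.sum_univ_three, Fin.sum_univ_three, Fin.sum_univ_three, Fin.sum_univ_three,
        ep 0, ep 1, ep 2]
      ring
    rw [setIntegral_congr_fun (meas_fund lx ly) (fun x _ => e x)] at hnon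
    rw [integral_add (Int ((gradSq_cont hθs).fun_sub
        (continuous_const.fun_mul (cont_dot hθs hφs))))
      (Int (continuous_const.fun_mul (gradSq_cont hφs)))] at hnon
    rw [integral_sub (Int (gradSq_cont hθs))
      (Int (continuous_const.fun_mul (cont_dot hθs hφs)))] at hnon
    rw [MeasureTheory.integral_const_mul, MeasureTheory.integral_const_mul] at hnon
    rw [← hA, ← hB, ← hC] at hnon
    linarith
  -- Step 5 : conclusion
  have hηnn : 0 ≤ ∫ x in fund lx ly, gradSq η x :=
    setIntegral_nonneg (meas_fund lx ly)
      (fun x _ => Finset.sum_nonneg (fun i _ => sq_nonneg _))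
  have hIξ : 0 < ∫ x in fund lx ly, gradSq ξ x := by
    have h0 : (0:ℝ) < V * ((1/(lx*ly)) * ∫ x in fund lx ly, gradSq ξ x) :=
      mul_pos hVpos hξ_ne
    have h1 : V * ((1/(lx*ly)) * ∫ x in fund lx ly, gradSq ξ x)
        = ∫ x in fund lx ly, gradSq ξ x := by
      rw [hV]; field_simp
    rwa [h1] at h0
  have hCpos : 0 < C := by rw [step3]; linarith
  have hkey : B^2 ≤ A * C := by
    have hq := step4 (B/C)
    have e : A - 2*(B/C)*B + (B/C)^2*C = A - B^2/C := by
      field_simp; ring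
    rw [e] at hq
    have : B^2 / C ≤ A := by linarith
    calc B^2 = (B^2/C) * C := by field_simp
    _ ≤ A * C := mul_le_mul_of_nonneg_right this hCpos.le
  -- final algebra
  unfold avg
  rw [← hV, step1, step2]
  have hden : (1/V) * (∫ x in fund lx ly, gradSq η x)
      + (1/V) * (∫ x in fund lx ly, gradSq ξ x) = (1/V) * C := by
    rw [step3]; ring
  rw [hden]
  have hCV : 0 < (1/V) * C := mul_pos (by positivity) hCpos
  rw [ge_iff_le, div_le_iff₀ hCV]
  have lhs_eq : ((1/V) * B)^2 = B^2 * (1/V^2) := by ring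
  have rhs_eq : ((1/V) * (A + V) - 1) * ((1/V) * C) = (A * C) * (1/V^2) := by
    field_simp
    ring
  rw [lhs_eq, rhs_eq]
  have : (0:ℝ) < 1/V^2 := by positivity
  exact mul_le_mul_of_nonneg_right hkey this.le
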